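/- Let Γ : I → ℝ^{2,3} be a biisotropic curve on an open interval I and let R, R̃ : I → ℝ^{2,3} be two isotropic normal vector fields along Γ. Then for every τ ∈ I the vector R̃(τ) − R(τ) is a scalar multiple of Γ′(τ); in particular the null plane span{R(τ), Γ′(τ)} does not depend on the choice of isotropic normal vector field. -/

import Mathlib

/-- The signature `(2,3)` bilinear form on `ℝ⁵`. -/
noncomputable def ip (X Y : Fin 5 → ℝ) : ℝ :=
  -(X 0 * Y 4 + X 4 * Y 0) - X 1 * Y 1 + X 2 * Y 2 + X 3 * Y 3

lemma ip_symm (X Y : Fin 5 → ℝ) : ip X Y = ip Y X := by simp [ip]; ring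

lemma ip_add_left (X Y Z : Fin 5 → ℝ) : ip (X + Y) Z = ip X Z + ip Y Z := by
  simp [ip]; ring

/-- `ip` as a bilinear map. -/
noncomputable def ipL : (Fin 5 → ℝ) →ₗ[ℝ] (Fin 5 → ℝ) →ₗ[ℝ] ℝ :=
  LinearMap.mk₂ ℝ ip
    (by intro m₁ m₂ n; simp [ip]; ring)
    (by intro c m n; simp [ip]; ring)
    (by intro m n₁ n₂; simp [ip]; ring)
    (by intro c m n; simp [ip]; ring)

lemma ip_nondeg {x : Fin 5 → ℝ} (h : ∀ y, ip x y = 0) : x = 0 := by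
  have h0 := h (Pi.single 0 1)
  have h1 := h (Pi.single 1 1)
  have h2 := h (Pi.single 2 1)
  have h3 := h (Pi.single 3 1)
  have h4 := h (Pi.single 4 1)
  simp [ip, Pi.single_apply] at h0 h1 h2 h3 h4
  funext i
  fin_cases i <;> simp_all

lemma ipL_ker : LinearMap.ker ipL = ⊥ := by
  rw [LinearMap.ker_eq_bot']
  intro m hm
  exact ip_nondeg fun y => by
    have : ipL m y = 0 := by rw [hm]; rfl
    simpa [ipL] using this

/-- The key linear-algebra fact: a vector `d = r' - r` orthogonal (w.r.t. `ip`) to the four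
linearly independent vectors `x1, x2, x3, r + r'` must be a multiple of `x2`. -/
lemma key (x1 x2 x3 r r' : Fin 5 → ℝ)
    (g11 : ip x1 x1 = 1) (g12 : ip x1 x2 = 0) (g13 : ip x1 x3 = 0)
    (g22 : ip x2 x2 = 0) (g23 : ip x2 x3 = 0) (g33 : ip x3 x3 = 0)
    (hli : LinearIndependent ℝ ![x2, x3])
    (hr1 : ip r x1 = 0) (hr2 : ip r x2 = 0) (hr3 : ip r x3 = 1) (hrr : ip r r = 0)
    (hs1 : ip r' x1 = 0) (hs2 : ip r' x2 = 0) (hs3 : ip r' x3 = 1) (hss : ip r' r' = 0) :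
    ∃ c : ℝ, r' - r = c • x2 := by
  set v : Fin 4 → (Fin 5 → ℝ) := ![x1, x2, x3, r + r'] with hv
  have hx2 : x2 ≠ 0 := by
    have := hli.ne_zero 0
    simpa using this
  -- linear independence of the four vectors
  have hliv : LinearIndependent ℝ v := by
    rw [Fintype.linearIndependent_iff]
    intro g hg
    have key0 : ∀ y : Fin 5 → ℝ, ∑ i, g i * ip (v i) y = 0 := by
      intro y
      have h0 : ipL (∑ i, g i • v i) y = 0 := by rw [hg]; simp
      simpa [map_sum, LinearMap.sum_apply, map_smul, smul_eq_mul, ipL] using h0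
    have e0 := key0 x1
    have e2 := key0 x3
    rw [Fin.sum_univ_four] at e0 e2
    simp only [hv, Matrix.cons_val_zero, Matrix.cons_val_one, Matrix.head_cons,
      Matrix.cons_val_two, Matrix.tail_cons, Matrix.cons_val_three] at e0 e2
    rw [g11, ip_symm x2 x1, g12, ip_symm x3 x1, g13, ip_add_left, hr1, hs1] at e0
    rw [g13, g23, g33, ip_add_left, hr3, hs3] at e2
    have hg0 : g 0 = 0 := by linarith
    have hg3 : g 3 = 0 := by linarith
    have hrest : g 1 • x2 + g 2 • x3 = 0 := by
      have := hg
      rw [Fin.sum_univ_four] at this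
      simp only [hv, Matrix.cons_val_zero, Matrix.cons_val_one, Matrix.head_cons,
        Matrix.cons_val_two, Matrix.tail_cons, Matrix.cons_val_three, hg0, hg3,
        zero_smul, zero_add, add_zero] at this
      exact this
    have h12 := Fintype.linearIndependent_iff.mp hli ![g 1, g 2] (by
      rw [Fin.sum_univ_two]; simpa using hrest)
    intro i
    fin_cases i
    · exact hg0
    · simpa using h12 0
    · simpa using h12 1
    · exact hg3
  -- the corresponding family of linear functionals
  have hlif : LinearIndependent ℝ (ipL ∘ v) := hliv.map' ipL ipL_ker
  set W : Submodule ℝ (Module.Dual ℝ (Fin 5 → ℝ)) :=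
    Submodule.span ℝ (Set.range (ipL ∘ v)) with hW
  have hWrank : Module.finrank ℝ W = 4 := by
    rw [hW, finrank_span_eq_card hlif]; simp
  have hco : Module.finrank ℝ W.dualCoannihilator = 1 := by
    have h5 := Subspace.finrank_add_finrank_dualCoannihilator_eq W
    rw [hWrank] at h5
    rw [Module.finrank_pi] at h5
    simp only [Fintype.card_fin] at h5
    omega
  -- membership criterion
  have hmem : ∀ z : Fin 5 → ℝ, (∀ i, ip (v i) z = 0) → z ∈ W.dualCoannihilator := by
    intro z hz
    rw [Submodule.mem_dualCoannihilator]
    intro φ hφ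
    rw [hW] at hφ
    induction hφ using Submodule.span_induction with
    | mem x hx =>
      obtain ⟨i, rfl⟩ := hx
      simpa [ipL] using hz i
    | zero => simp
    | add x y _ _ hx hy => simp [hx, hy]
    | smul c x _ hx => simp [hx]
  -- x2 lies in the coannihilator
  have hx2mem : x2 ∈ W.dualCoannihilator := by
    apply hmem
    intro i
    fin_cases i
    · simpa [hv] using g12
    · simpa [hv] using g22
    · simpa [hv] using ip_symm x3 x2 ▸ g23
    · show ip (r + r') x2 = 0
      rw [ip_add_left, hr2, hs2]; ring
  -- d = r' - r lies in the coannihilator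
  have hdmem : r' - r ∈ W.dualCoannihilator := by
    apply hmem
    intro i
    fin_cases i
    · show ip x1 (r' - r) = 0
      rw [ip_symm]
      have : ip (r' - r) x1 = ip r' x1 - ip r x1 := by simp [ip]; ring
      rw [this, hr1, hs1]; ring
    · show ip x2 (r' - r) = 0
      rw [ip_symm]
      have : ip (r' - r) x2 = ip r' x2 - ip r x2 := by simp [ip]; ring
      rw [this, hr2, hs2]; ring
    · show ip x3 (r' - r) = 0
      rw [ip_symm]
      have : ip (r' - r) x3 = ip r' x3 - ip r x3 := by simp [ip]; ring
      rw [this, hr3, hs3]; ring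
    · show ip (r + r') (r' - r) = 0
      have : ip (r + r') (r' - r) = ip r' r' - ip r r := by simp [ip]; ring
      rw [this, hrr, hss]; ring
  -- the coannihilator is exactly the span of x2
  have hspan : Submodule.span ℝ {x2} = W.dualCoannihilator := by
    apply Submodule.eq_of_le_of_finrank_le
    · rw [Submodule.span_le, Set.singleton_subset_iff]
      exact hx2mem
    · rw [hco, finrank_span_singleton hx2]
  rw [← hspan] at hdmem
  obtain ⟨c, hc⟩ := Submodule.mem_span_singleton.mp hdmem
  exact ⟨c, hc.symm⟩

/-- Derivative of `t ↦ ip (f t) (g t)`. -/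
lemma hasDerivAt_ip_comp {f g : ℝ → Fin 5 → ℝ} {f' g' : Fin 5 → ℝ} {τ : ℝ}
    (hf : HasDerivAt f f' τ) (hg : HasDerivAt g g' τ) :
    HasDerivAt (fun t => ip (f t) (g t)) (ip f' (g τ) + ip (f τ) g') τ := by
  have hfc : ∀ i, HasDerivAt (fun t => f t i) (f' i) τ := fun i =>
    (ContinuousLinearMap.proj i : (Fin 5 → ℝ) →L[ℝ] ℝ).hasFDerivAt.comp_hasDerivAt τ hf
  have hgc : ∀ i, HasDerivAt (fun t => g t i) (g' i) τ := fun i =>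
    (ContinuousLinearMap.proj i : (Fin 5 → ℝ) →L[ℝ] ℝ).hasFDerivAt.comp_hasDerivAt τ hg
  have H := (((((hfc 0).mul (hgc 4)).add ((hfc 4).mul (hgc 0))).neg.sub
    ((hfc 1).mul (hgc 1))).add ((hfc 2).mul (hgc 2))).add ((hfc 3).mul (hgc 3))
  unfold ip
  refine H.congr_deriv ?_
  ring

lemma deriv_vanish {F : ℝ → ℝ} {v a b τ : ℝ} {c : ℝ} (hτ : τ ∈ Set.Ioo a b)
    (hd : HasDerivAt F v τ) (hF : ∀ t ∈ Set.Ioo a b, F t = c) : v = 0 := by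
  have hev : F =ᶠ[nhds τ] fun _ => c :=
    Filter.eventuallyEq_of_mem (Ioo_mem_nhds hτ.1 hτ.2) hF
  have h0 : HasDerivAt F 0 τ := (hasDerivAt_const τ c).congr_of_eventuallyEq hev
  exact hd.unique h0

/-- two isotropic normal vector fields `R, R̃` along a biisotropic curve `Γ`
differ by a multiple of `Γ′`; in particular `span{R(τ), Γ′(τ)}` is independent of the
choice of isotropic normal vector field. -/
theorem stmt4 (a b : ℝ) (Γ R R' : ℝ → Fin 5 → ℝ)
    (hΓ : ContDiff ℝ (⊤ : ℕ∞) Γ) (hR : ContDiff ℝ (⊤ : ℕ∞) R) (hR' : ContDiff ℝ (⊤ : ℕ∞) R')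
    -- `Γ` is biisotropic
    (h1 : ∀ τ ∈ Set.Ioo a b, ip (Γ τ) (Γ τ) = 1)
    (h2 : ∀ τ ∈ Set.Ioo a b, ip (deriv Γ τ) (deriv Γ τ) = 0)
    (h3 : ∀ τ ∈ Set.Ioo a b, ip (deriv (deriv Γ) τ) (deriv (deriv Γ) τ) = 0)
    (h4 : ∀ τ ∈ Set.Ioo a b, LinearIndependent ℝ ![deriv Γ τ, deriv (deriv Γ) τ])
    -- `R` is an isotropic normal vector field along `Γ`
    (hR1 : ∀ τ ∈ Set.Ioo a b, ip (R τ) (R τ) = 0)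
    (hR2 : ∀ τ ∈ Set.Ioo a b, ip (R τ) (Γ τ) = 0)
    (hR3 : ∀ τ ∈ Set.Ioo a b, ip (R τ) (deriv Γ τ) = 0)
    (hR4 : ∀ τ ∈ Set.Ioo a b, ip (R τ) (deriv (deriv Γ) τ) = 1)
    -- `R̃` is an isotropic normal vector field along `Γ`
    (hR'1 : ∀ τ ∈ Set.Ioo a b, ip (R' τ) (R' τ) = 0)
    (hR'2 : ∀ τ ∈ Set.Ioo a b, ip (R' τ) (Γ τ) = 0)
    (hR'3 : ∀ τ ∈ Set.Ioo a b, ip (R' τ) (deriv Γ τ) = 0)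
    (hR'4 : ∀ τ ∈ Set.Ioo a b, ip (R' τ) (deriv (deriv Γ) τ) = 1) :
    ∀ τ ∈ Set.Ioo a b,
      (∃ c : ℝ, R' τ - R τ = c • deriv Γ τ) ∧
      Submodule.span ℝ ({R τ, deriv Γ τ} : Set (Fin 5 → ℝ)) =
        Submodule.span ℝ ({R' τ, deriv Γ τ} : Set (Fin 5 → ℝ)) := by
  have hΓdiff : Differentiable ℝ Γ := hΓ.differentiable (by simp)
  have hΓinf : ContDiff ℝ ((⊤ : ℕ∞) : WithTop ℕ∞) Γ := hΓ.of_le (by simp)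
  have hΓ'cd : ContDiff ℝ ((⊤ : ℕ∞) : WithTop ℕ∞) (deriv Γ) :=
    (contDiff_infty_iff_deriv.mp hΓinf).2
  have hΓ'diff : Differentiable ℝ (deriv Γ) :=
    hΓ'cd.differentiable (by simp)
  have dΓ : ∀ t, HasDerivAt Γ (deriv Γ t) t := fun t => (hΓdiff t).hasDerivAt
  have dΓ' : ∀ t, HasDerivAt (deriv Γ) (deriv (deriv Γ) t) t := fun t =>
    (hΓ'diff t).hasDerivAt
  -- ⟨Γ, Γ'⟩ = 0 on the interval
  have g1 : ∀ τ ∈ Set.Ioo a b, ip (Γ τ) (deriv Γ τ) = 0 := by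
    intro τ hτ
    have H := hasDerivAt_ip_comp (dΓ τ) (dΓ τ)
    have hz := deriv_vanish hτ H h1
    have hs := ip_symm (deriv Γ τ) (Γ τ)
    linarith
  -- ⟨Γ', Γ''⟩ = 0 on the interval
  have g2 : ∀ τ ∈ Set.Ioo a b, ip (deriv Γ τ) (deriv (deriv Γ) τ) = 0 := by
    intro τ hτ
    have H := hasDerivAt_ip_comp (dΓ' τ) (dΓ' τ)
    have hz := deriv_vanish hτ H h2
    have hs := ip_symm (deriv (deriv Γ) τ) (deriv Γ τ)
    linarith
  -- ⟨Γ, Γ''⟩ = 0 on the interval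
  have g3 : ∀ τ ∈ Set.Ioo a b, ip (Γ τ) (deriv (deriv Γ) τ) = 0 := by
    intro τ hτ
    have H := hasDerivAt_ip_comp (dΓ τ) (dΓ' τ)
    have hz := deriv_vanish hτ H g1
    have h2τ := h2 τ hτ
    linarith
  intro τ hτ
  obtain ⟨c, hc⟩ := key (Γ τ) (deriv Γ τ) (deriv (deriv Γ) τ) (R τ) (R' τ)
    (h1 τ hτ) (g1 τ hτ) (g3 τ hτ) (h2 τ hτ) (g2 τ hτ) (h3 τ hτ) (h4 τ hτ)
    (hR2 τ hτ) (hR3 τ hτ) (hR4 τ hτ) (hR1 τ hτ)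
    (hR'2 τ hτ) (hR'3 τ hτ) (hR'4 τ hτ) (hR'1 τ hτ)
  refine ⟨⟨c, hc⟩, ?_⟩
  have hmem1 : R τ ∈ Submodule.span ℝ ({R' τ, deriv Γ τ} : Set (Fin 5 → ℝ)) :=
    Submodule.mem_span_pair.mpr ⟨1, -c, by rw [one_smul, neg_smul, ← hc]; abel⟩
  have hmem2 : R' τ ∈ Submodule.span ℝ ({R τ, deriv Γ τ} : Set (Fin 5 → ℝ)) :=
    Submodule.mem_span_pair.mpr ⟨1, c, by rw [one_smul, ← hc]; abel⟩
  apply le_antisymm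
  · rw [Submodule.span_le]
    intro x hx
    simp only [Set.mem_insert_iff, Set.mem_singleton_iff] at hx
    rcases hx with rfl | rfl
    · exact hmem1
    · exact Submodule.subset_span (by simp)
  · rw [Submodule.span_le]
    intro x hx
    simp only [Set.mem_insert_iff, Set.mem_singleton_iff] at hx
    rcases hx with rfl | rfl
    · exact hmem2
    · exact Submodule.subset_span (by simp)
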